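/- Let (X,Y) have the Lancaster density with coefficients (ρₙ) satisfying Σₙ |ρₙ| cₙ dₙ ≤ 1. Then the Pearson correlation coefficient of X and Y equals ρ₁: ρ(X,Y) = ρ₁. -/

import Mathlib

/-!
Write the Lancaster density as `f₁ ⊗ f₂ + ∑ ρₙ (φₙ f₁) ⊗ (ψₙ f₂)`. Since `|φₙ| ≤ cₙ` and
`|ψₙ| ≤ dₙ` on the supports, the series is dominated by `(∑ |ρₙ| cₙ dₙ) f₁ ⊗ f₂`: it can be
integrated term by term against `P(x) Q(y)`, and the bound `≤ 1` makes the density nonnegative.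
Orthonormality then kills almost every term: `φ₀ = 1` shows that the marginals are `f₁`, `f₂`,
and `x - EX = σ₁ φ₁(x)` with `σ₁` the inverse leading coefficient of `φ₁`, so that
`Var X = σ₁²`, `Var Y = σ₂²` and `Cov(X, Y) = ρ₁ σ₁ σ₂`.
-/

open MeasureTheory ProbabilityTheory Real
open scoped ENNReal

noncomputable def covar {Ω : Type*} [MeasurableSpace Ω] (μ : Measure Ω) (X Y : Ω → ℝ) : ℝ :=
  ∫ ω, (X ω - ∫ a, X a ∂μ) * (Y ω - ∫ a, Y a ∂μ) ∂μ

noncomputable def pearson {Ω : Type*} [MeasurableSpace Ω] (μ : Measure Ω) (X Y : Ω → ℝ) : ℝ :=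
  covar μ X Y / (Real.sqrt (variance X μ) * Real.sqrt (variance Y μ))

noncomputable def maxCorr {Ω : Type*} [MeasurableSpace Ω] (μ : Measure Ω) (X Y : Ω → ℝ) : ℝ :=
  sSup { r : ℝ | ∃ g₁ g₂ : ℝ → ℝ, Measurable g₁ ∧ Measurable g₂ ∧
    MemLp (g₁ ∘ X) 2 μ ∧ MemLp (g₂ ∘ Y) 2 μ ∧
    0 < variance (g₁ ∘ X) μ ∧ 0 < variance (g₂ ∘ Y) μ ∧
    r = pearson μ (g₁ ∘ X) (g₂ ∘ Y) }

/-- `g` is a probability density on `ℝ` supported in `[a, b]`. -/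
def IsDensityOn (g : ℝ → ℝ) (a b : ℝ) : Prop :=
  (∀ x, 0 ≤ g x) ∧ (∀ x, x ∉ Set.Icc a b → g x = 0) ∧ (∫ x, g x = 1)

/-- `φ` is the orthonormal polynomial system of the density `g`:
degree `n`, positive leading coefficients, orthonormal in `L²(g dx)`. -/
def OrthonormalPolys (g : ℝ → ℝ) (φ : ℕ → Polynomial ℝ) : Prop :=
  (∀ n, (φ n).natDegree = n) ∧ (∀ n, 0 < (φ n).leadingCoeff) ∧
  (∀ m n, ∫ x, (φ m).eval x * (φ n).eval x * g x = if m = n then 1 else 0)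

/-- The Lancaster density `f(x,y) = f₁(x) f₂(y) (1 + Σₙ≥₁ ρₙ φₙ(x) ψₙ(y))`. -/
noncomputable def lancaster (f₁ f₂ : ℝ → ℝ) (φ ψ : ℕ → Polynomial ℝ) (ρ : ℕ → ℝ)
    (x y : ℝ) : ℝ :=
  f₁ x * f₂ y * (1 + ∑' n : ℕ, ρ (n + 1) * (φ (n + 1)).eval x * (ψ (n + 1)).eval y)

open Set Polynomial

theorem abs_mul_le_mul_abs_mul {p w f C : ℝ} (hf : 0 ≤ f) (hw : |w| ≤ C * f) :
    |p * w| ≤ C * |p * f| := by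
  rw [abs_mul, abs_mul, abs_of_nonneg hf]
  calc |p| * |w| ≤ |p| * (C * f) := mul_le_mul_of_nonneg_left hw (abs_nonneg p)
    _ = C * (|p| * f) := by ring

theorem abs_mul_mul_le {a x y A B : ℝ} (hx : |x| ≤ A) (hy : |y| ≤ B) :
    |a * x * y| ≤ |a| * A * B := by
  rw [abs_mul, abs_mul, mul_assoc, mul_assoc]
  exact mul_le_mul_of_nonneg_left (mul_le_mul hx hy (abs_nonneg y) ((abs_nonneg x).trans hx))
    (abs_nonneg a)

namespace IsDensityOn

variable {g : ℝ → ℝ} {a b : ℝ}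

theorem integrable (hg : IsDensityOn g a b) : Integrable g :=
  Integrable.of_integral_ne_zero (by rw [hg.2.2]; exact one_ne_zero)

theorem abs_mul_le (hg : IsDensityOn g a b) {P : ℝ → ℝ} {C : ℝ}
    (hC : ∀ x ∈ Icc a b, |P x| ≤ C) (x : ℝ) : |P x * g x| ≤ C * g x := by
  by_cases hx : x ∈ Icc a b
  · rw [abs_mul, abs_of_nonneg (hg.1 x)]
    exact mul_le_mul_of_nonneg_right (hC x hx) (hg.1 x)
  · simp [hg.2.1 x hx]

theorem integrable_mul (hg : IsDensityOn g a b) {P : ℝ → ℝ} (hP : Continuous P) :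
    Integrable (fun x => P x * g x) := by
  obtain ⟨C, hC⟩ := (isCompact_Icc (a := a) (b := b)).exists_bound_of_continuousOn hP.continuousOn
  exact (hg.integrable.const_mul C).mono' (hP.aestronglyMeasurable.mul hg.integrable.1)
    (ae_of_all _ (hg.abs_mul_le hC))

end IsDensityOn

namespace OrthonormalPolys

variable {g : ℝ → ℝ} {φ : ℕ → ℝ[X]}

theorem eq_one (hφ : OrthonormalPolys g φ) (hg : ∫ x, g x = 1) : φ 0 = 1 := by
  have hC := eq_C_of_natDegree_eq_zero (hφ.1 0)
  have hpos : 0 < (φ 0).coeff 0 := by simpa [leadingCoeff, hφ.1 0] using hφ.2.1 0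
  have hsq : (φ 0).coeff 0 * (φ 0).coeff 0 = 1 := by
    have h00 := hφ.2.2 0 0
    rw [hC] at h00
    simpa [integral_const_mul, hg] using h00
  rw [hC, show (φ 0).coeff 0 = 1 by nlinarith, C_1]

theorem integral_eval_mul_eq_zero (hφ : OrthonormalPolys g φ) (hg : ∫ x, g x = 1) {n : ℕ}
    (hn : n ≠ 0) : ∫ x, (φ n).eval x * g x = 0 := by
  simpa [hφ.eq_one hg, Ne.symm hn] using hφ.2.2 0 n

variable {a b : ℝ}

theorem sub_integral_eq_mul_eval_one (hφ : OrthonormalPolys g φ) (hg : IsDensityOn g a b) (x : ℝ) :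
    x - ∫ t, t * g t = (φ 1).leadingCoeff⁻¹ * (φ 1).eval x := by
  set A := (φ 1).leadingCoeff
  have hA : A ≠ 0 := (hφ.2.1 1).ne'
  have heval : ∀ t, (φ 1).eval t = A * t + (φ 1).coeff 0 := fun t => by
    conv_lhs => rw [eq_X_add_C_of_natDegree_le_one (hφ.1 1).le]
    simp [A, leadingCoeff, hφ.1 1]
  have hmean : A * (∫ t, t * g t) + (φ 1).coeff 0 = 0 := by
    rw [← hφ.integral_eval_mul_eq_zero hg.2.2 one_ne_zero]
    simp_rw [heval, add_mul, mul_assoc]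
    rw [integral_add ((hg.integrable_mul (P := fun t => t) continuous_id).const_mul A)
        (hg.integrable.const_mul _),
      integral_const_mul, integral_const_mul, hg.2.2, mul_one]
  rw [heval, show (φ 1).coeff 0 = -(A * ∫ t, t * g t) by linarith]
  field_simp
  ring

theorem integral_sub_mul_eval_mul (hφ : OrthonormalPolys g φ) (hg : IsDensityOn g a b) (n : ℕ) :
    ∫ x, (x - ∫ t, t * g t) * ((φ n).eval x * g x) =
      if 1 = n then (φ 1).leadingCoeff⁻¹ else 0 := by
  simp_rw [hφ.sub_integral_eq_mul_eval_one hg, mul_assoc, integral_const_mul, ← mul_assoc,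
    hφ.2.2 1 n]
  split_ifs <;> simp

theorem integral_sub_mul (hφ : OrthonormalPolys g φ) (hg : IsDensityOn g a b) :
    ∫ x, (x - ∫ t, t * g t) * g x = 0 := by
  simpa [hφ.eq_one hg.2.2] using hφ.integral_sub_mul_eval_mul hg 0

theorem integral_sub_sq_mul (hφ : OrthonormalPolys g φ) (hg : IsDensityOn g a b) :
    ∫ x, (x - ∫ t, t * g t) ^ 2 * g x = (φ 1).leadingCoeff⁻¹ ^ 2 := by
  have hsq : ∀ x, (x - ∫ t, t * g t) ^ 2 * g x =
      (φ 1).leadingCoeff⁻¹ * ((x - ∫ t, t * g t) * ((φ 1).eval x * g x)) := fun x => by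
    nth_rw 1 [sq, hφ.sub_integral_eq_mul_eval_one hg x]
    ring
  simp_rw [hsq]
  rw [integral_const_mul, hφ.integral_sub_mul_eval_mul hg, if_pos rfl, sq]

end OrthonormalPolys

section SeriesDensity

variable {α β : Type*} {f₁ : α → ℝ} {f₂ : β → ℝ} {u : ℕ → α → ℝ} {v : ℕ → β → ℝ} {r c d : ℕ → ℝ}

theorem abs_tsum_mul_mul_le (hu : ∀ n x, |u n x| ≤ c n * f₁ x)
    (hv : ∀ n y, |v n y| ≤ d n * f₂ y) (hsum : Summable fun n => |r n| * c n * d n)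
    (x : α) (y : β) :
    |∑' n, r n * u n x * v n y| ≤ (∑' n, |r n| * c n * d n) * (f₁ x * f₂ y) :=
  tsum_of_norm_bounded (f := fun n => r n * u n x * v n y)
    (hsum.hasSum.mul_right (f₁ x * f₂ y)) fun n =>
      (abs_mul_mul_le (hu n x) (hv n y)).trans_eq (by ring)

theorem add_tsum_mul_mul_nonneg (hf₁ : ∀ x, 0 ≤ f₁ x) (hf₂ : ∀ y, 0 ≤ f₂ y)
    (hu : ∀ n x, |u n x| ≤ c n * f₁ x) (hv : ∀ n y, |v n y| ≤ d n * f₂ y)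
    (hsum : Summable fun n => |r n| * c n * d n) (hr : ∑' n, |r n| * c n * d n ≤ 1)
    (x : α) (y : β) :
    0 ≤ f₁ x * f₂ y + ∑' n, r n * u n x * v n y := by
  have hf := mul_nonneg (hf₁ x) (hf₂ y)
  have := (abs_le.1 ((abs_tsum_mul_mul_le hu hv hsum x y).trans
    (mul_le_of_le_one_left hf hr))).1
  linarith

variable [MeasurableSpace α] [MeasurableSpace β] {μ₁ : Measure α} {μ₂ : Measure β}

theorem MeasureTheory.Integrable.mul_of_abs_le_mul {μ : Measure α} {f w P : α → ℝ} {C : ℝ}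
    (hPf : Integrable (fun x => P x * f x) μ) (hf : ∀ x, 0 ≤ f x) (hw : ∀ x, |w x| ≤ C * f x)
    (hwm : AEStronglyMeasurable w μ) (hP : AEStronglyMeasurable P μ) :
    Integrable (fun x => P x * w x) μ :=
  (hPf.abs.const_mul C).mono' (hP.mul hwm)
    (ae_of_all _ fun x => abs_mul_le_mul_abs_mul (hf x) (hw x))

theorem integral_abs_mul_le_of_abs_le_mul {μ : Measure α} {f w P : α → ℝ} {C : ℝ}
    (hf : ∀ x, 0 ≤ f x) (hw : ∀ x, |w x| ≤ C * f x) (hwm : AEStronglyMeasurable w μ)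
    (hP : AEStronglyMeasurable P μ) (hPf : Integrable (fun x => P x * f x) μ) :
    ∫ x, |P x * w x| ∂μ ≤ C * ∫ x, |P x * f x| ∂μ := by
  rw [← integral_const_mul]
  exact integral_mono (hPf.mul_of_abs_le_mul hf hw hwm hP).abs
    (hPf.abs.const_mul C) fun x => abs_mul_le_mul_abs_mul (hf x) (hw x)

theorem MeasureTheory.AEStronglyMeasurable.add_tsum_mul_mul
    (hf₁ : AEStronglyMeasurable f₁ μ₁) (hf₂ : AEStronglyMeasurable f₂ μ₂)
    (hum : ∀ n, AEStronglyMeasurable (u n) μ₁) (hvm : ∀ n, AEStronglyMeasurable (v n) μ₂) :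
    AEStronglyMeasurable (fun p : α × β => f₁ p.1 * f₂ p.2 + ∑' n, r n * u n p.1 * v n p.2)
      (μ₁.prod μ₂) :=
  (hf₁.comp_fst.mul hf₂.comp_snd).add
    (AEStronglyMeasurable.tsum fun n => (aestronglyMeasurable_const.mul (hum n).comp_fst).mul
      (hvm n).comp_snd)

theorem integral_prod_add_tsum_mul_mul [SFinite μ₁] [SFinite μ₂] (hf₁ : ∀ x, 0 ≤ f₁ x)
    (hf₂ : ∀ y, 0 ≤ f₂ y) (hu : ∀ n x, |u n x| ≤ c n * f₁ x) (hv : ∀ n y, |v n y| ≤ d n * f₂ y)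
    (hum : ∀ n, AEStronglyMeasurable (u n) μ₁) (hvm : ∀ n, AEStronglyMeasurable (v n) μ₂)
    (hsum : Summable fun n => |r n| * c n * d n) {P : α → ℝ} {Q : β → ℝ}
    (hP : AEStronglyMeasurable P μ₁) (hQ : AEStronglyMeasurable Q μ₂)
    (hPf : Integrable (fun x => P x * f₁ x) μ₁) (hQf : Integrable (fun y => Q y * f₂ y) μ₂) :
    ∫ p, (f₁ p.1 * f₂ p.2 + ∑' n, r n * u n p.1 * v n p.2) * (P p.1 * Q p.2) ∂μ₁.prod μ₂ =
      (∫ x, P x * f₁ x ∂μ₁) * (∫ y, Q y * f₂ y ∂μ₂) +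
        ∑' n, r n * ((∫ x, P x * u n x ∂μ₁) * ∫ y, Q y * v n y ∂μ₂) := by
  set T : ℕ → α × β → ℝ := fun n p => r n * (P p.1 * u n p.1) * (Q p.2 * v n p.2)
  have hPu n := hPf.mul_of_abs_le_mul hf₁ (hu n) (hum n) hP
  have hQv n := hQf.mul_of_abs_le_mul hf₂ (hv n) (hvm n) hQ
  have hT : ∀ n, Integrable (T n) (μ₁.prod μ₂) := fun n =>
    ((hPu n).const_mul (r n)).mul_prod (hQv n)
  have hT_abs : ∀ n p, |T n p| ≤ |r n| * c n * d n * (|P p.1 * f₁ p.1| * |Q p.2 * f₂ p.2|) :=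
    fun n p => (abs_mul_mul_le (abs_mul_le_mul_abs_mul (hf₁ p.1) (hu n p.1))
      (abs_mul_le_mul_abs_mul (hf₂ p.2) (hv n p.2))).trans_eq (by ring)
  have hT_norm : Summable fun n => ∫ p, ‖T n p‖ ∂μ₁.prod μ₂ := by
    refine (hsum.mul_right ((∫ x, |P x * f₁ x| ∂μ₁) * ∫ y, |Q y * f₂ y| ∂μ₂)).of_nonneg_of_le
      (fun n => integral_nonneg fun p => norm_nonneg _) fun n => ?_
    have hI₁ := integral_abs_mul_le_of_abs_le_mul hf₁ (hu n) (hum n) hP hPf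
    have hI₂ := integral_abs_mul_le_of_abs_le_mul hf₂ (hv n) (hvm n) hQ hQf
    calc ∫ p, ‖T n p‖ ∂μ₁.prod μ₂
        = |r n| * ((∫ x, |P x * u n x| ∂μ₁) * ∫ y, |Q y * v n y| ∂μ₂) := by
          rw [← integral_prod_mul, ← integral_const_mul]
          simp only [T, Real.norm_eq_abs, abs_mul, mul_assoc]
      _ ≤ |r n| * ((c n * ∫ x, |P x * f₁ x| ∂μ₁) * (d n * ∫ y, |Q y * f₂ y| ∂μ₂)) :=
          mul_le_mul_of_nonneg_left (mul_le_mul hI₁ hI₂ (integral_nonneg fun _ => abs_nonneg _)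
            ((integral_nonneg fun _ => abs_nonneg _).trans hI₁)) (abs_nonneg _)
      _ = _ := by ring
  have hsum_int : Integrable (fun p => ∑' n, T n p) (μ₁.prod μ₂) :=
    ((hPf.abs.mul_prod hQf.abs).const_mul (∑' n, |r n| * c n * d n)).mono'
      (AEStronglyMeasurable.tsum fun n => (hT n).1) (ae_of_all _ fun p =>
        tsum_of_norm_bounded (hsum.hasSum.mul_right _) fun n => hT_abs n p)
  have hpoint : ∀ p : α × β,
      (f₁ p.1 * f₂ p.2 + ∑' n, r n * u n p.1 * v n p.2) * (P p.1 * Q p.2) =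
        P p.1 * f₁ p.1 * (Q p.2 * f₂ p.2) + ∑' n, T n p := fun p => by
    rw [add_mul, ← tsum_mul_right]
    exact congrArg₂ _ (by ring) (tsum_congr fun n => by ring)
  simp_rw [hpoint]
  rw [integral_add (hPf.mul_prod hQf) hsum_int,
    integral_prod_mul (fun x => P x * f₁ x) (fun y => Q y * f₂ y),
    ← integral_tsum_of_summable_integral_norm hT hT_norm]
  congr 1
  refine tsum_congr fun n => ?_
  rw [← integral_prod_mul, ← integral_const_mul]
  simp only [T, mul_assoc]

end SeriesDensity

theorem integral_comp_eq_integral_mul_of_map_eq_withDensity {Ω γ : Type*} [MeasurableSpace Ω]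
    [MeasurableSpace γ] {μ : Measure Ω} {ν : Measure γ} {Z : Ω → γ} (hZ : AEMeasurable Z μ)
    {F : γ → ℝ} (hF : AEMeasurable F ν) (hF₀ : ∀ z, 0 ≤ F z)
    (hmap : μ.map Z = ν.withDensity fun z => ENNReal.ofReal (F z)) {G : γ → ℝ}
    (hG : AEStronglyMeasurable G (μ.map Z)) :
    ∫ ω, G (Z ω) ∂μ = ∫ z, F z * G z ∂ν := by
  rw [← integral_map hZ hG, hmap, integral_withDensity_eq_integral_toReal_smul₀
    hF.ennreal_ofReal (ae_of_all _ fun _ => ENNReal.ofReal_lt_top)]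
  simp only [ENNReal.toReal_ofReal (hF₀ _), smul_eq_mul]

theorem pearson_eq_of_moments {Ω : Type*} [MeasurableSpace Ω] {μ : Measure Ω} {X Y : Ω → ℝ}
    (hX : AEMeasurable X μ) (hY : AEMeasurable Y μ) {m₁ m₂ σ₁ σ₂ r : ℝ} (hσ₁ : 0 < σ₁)
    (hσ₂ : 0 < σ₂) (hmX : ∫ ω, X ω ∂μ = m₁) (hmY : ∫ ω, Y ω ∂μ = m₂)
    (hvX : ∫ ω, (X ω - m₁) ^ 2 ∂μ = σ₁ ^ 2) (hvY : ∫ ω, (Y ω - m₂) ^ 2 ∂μ = σ₂ ^ 2)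
    (hcov : ∫ ω, (X ω - m₁) * (Y ω - m₂) ∂μ = r * (σ₁ * σ₂)) :
    pearson μ X Y = r := by
  rw [pearson, covar, variance_eq_integral hX, variance_eq_integral hY, hmX, hmY, hvX, hvY, hcov,
    sqrt_sq hσ₁.le, sqrt_sq hσ₂.le, mul_div_assoc, div_self (mul_pos hσ₁ hσ₂).ne', mul_one]

theorem lancaster_eq (f₁ f₂ : ℝ → ℝ) (φ ψ : ℕ → ℝ[X]) (ρ : ℕ → ℝ) (x y : ℝ) :
    lancaster f₁ f₂ φ ψ ρ x y = f₁ x * f₂ y +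
      ∑' n, ρ (n + 1) * ((φ (n + 1)).eval x * f₁ x) * ((ψ (n + 1)).eval y * f₂ y) := by
  rw [lancaster, mul_add, mul_one, ← tsum_mul_left]
  exact congrArg _ (tsum_congr fun n => by ring)

theorem integral_comp_mul_comp_of_map_eq_lancaster {Ω : Type*} [MeasurableSpace Ω]
    {μ : Measure Ω} {X Y : Ω → ℝ} (hX : AEMeasurable X μ) (hY : AEMeasurable Y μ)
    {a₁ b₁ a₂ b₂ : ℝ} {f₁ f₂ : ℝ → ℝ} (hf₁ : IsDensityOn f₁ a₁ b₁) (hf₂ : IsDensityOn f₂ a₂ b₂)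
    {φ ψ : ℕ → ℝ[X]} {c d ρ : ℕ → ℝ} (hφc : ∀ n, ∀ x ∈ Icc a₁ b₁, |(φ n).eval x| ≤ c n)
    (hψd : ∀ n, ∀ y ∈ Icc a₂ b₂, |(ψ n).eval y| ≤ d n)
    (hsum : Summable fun n => |ρ (n + 1)| * c (n + 1) * d (n + 1))
    (hρ : ∑' n, |ρ (n + 1)| * c (n + 1) * d (n + 1) ≤ 1)
    (hjoint : μ.map (fun ω => (X ω, Y ω)) = (volume : Measure (ℝ × ℝ)).withDensity
      fun p => ENNReal.ofReal (lancaster f₁ f₂ φ ψ ρ p.1 p.2))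
    (P Q : ℝ → ℝ) (hP : Continuous P) (hQ : Continuous Q) :
    ∫ ω, P (X ω) * Q (Y ω) ∂μ = (∫ x, P x * f₁ x) * (∫ y, Q y * f₂ y) +
      ∑' n, ρ (n + 1) * ((∫ x, P x * ((φ (n + 1)).eval x * f₁ x)) *
        ∫ y, Q y * ((ψ (n + 1)).eval y * f₂ y)) := by
  have hu n := hf₁.abs_mul_le (hφc (n + 1))
  have hv n := hf₂.abs_mul_le (hψd (n + 1))
  have hum : ∀ n, AEStronglyMeasurable (fun x => (φ (n + 1)).eval x * f₁ x) := fun n =>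
    (φ (n + 1)).continuous.aestronglyMeasurable.mul hf₁.integrable.1
  have hvm : ∀ n, AEStronglyMeasurable (fun y => (ψ (n + 1)).eval y * f₂ y) := fun n =>
    (ψ (n + 1)).continuous.aestronglyMeasurable.mul hf₂.integrable.1
  have hL : AEMeasurable (fun p : ℝ × ℝ => lancaster f₁ f₂ φ ψ ρ p.1 p.2) := by
    simpa only [lancaster_eq, Measure.volume_eq_prod] using
      (hf₁.integrable.1.add_tsum_mul_mul hf₂.integrable.1 hum hvm).aemeasurable
  rw [integral_comp_eq_integral_mul_of_map_eq_withDensity (hX.prodMk hY) hL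
    (fun p => lancaster_eq f₁ f₂ φ ψ ρ p.1 p.2 ▸
      add_tsum_mul_mul_nonneg hf₁.1 hf₂.1 hu hv hsum hρ p.1 p.2) hjoint
    (G := fun p => P p.1 * Q p.2) (by fun_prop)]
  simp only [lancaster_eq, Measure.volume_eq_prod]
  exact integral_prod_add_tsum_mul_mul hf₁.1 hf₂.1 hu hv hum hvm hsum hP.aestronglyMeasurable
    hQ.aestronglyMeasurable (hf₁.integrable_mul hP) (hf₂.integrable_mul hQ)

theorem stmt9_general {Ω : Type*} [MeasurableSpace Ω] (μ : Measure Ω)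
    (X Y : Ω → ℝ) (hX : Measurable X) (hY : Measurable Y)
    (α₁ ω₁ α₂ ω₂ : ℝ)
    (f₁ f₂ : ℝ → ℝ) (hf₁ : IsDensityOn f₁ α₁ ω₁) (hf₂ : IsDensityOn f₂ α₂ ω₂)
    (φ ψ : ℕ → Polynomial ℝ)
    (hφ : OrthonormalPolys f₁ φ) (hψ : OrthonormalPolys f₂ ψ)
    (c d : ℕ → ℝ)
    (hc : ∀ n, c n = sSup ((fun x => |(φ n).eval x|) '' Set.Icc α₁ ω₁))
    (hd : ∀ n, d n = sSup ((fun y => |(ψ n).eval y|) '' Set.Icc α₂ ω₂))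
    (ρ : ℕ → ℝ)
    (hsum : Summable fun n : ℕ => |ρ (n + 1)| * c (n + 1) * d (n + 1))
    (hρ : ∑' n : ℕ, |ρ (n + 1)| * c (n + 1) * d (n + 1) ≤ 1)
    (hjoint : Measure.map (fun ω => (X ω, Y ω)) μ =
      (volume : Measure (ℝ × ℝ)).withDensity
        (fun p => ENNReal.ofReal (lancaster f₁ f₂ φ ψ ρ p.1 p.2))) :
    pearson μ X Y = ρ 1 := by
  have hφc : ∀ n, ∀ x ∈ Icc α₁ ω₁, |(φ n).eval x| ≤ c n := fun n x hx =>
    hc n ▸ le_csSup (isCompact_Icc.image (φ n).continuous.abs).bddAbove (mem_image_of_mem _ hx)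
  have hψd : ∀ n, ∀ y ∈ Icc α₂ ω₂, |(ψ n).eval y| ≤ d n := fun n y hy =>
    hd n ▸ le_csSup (isCompact_Icc.image (ψ n).continuous.abs).bddAbove (mem_image_of_mem _ hy)
  have hmoment := integral_comp_mul_comp_of_map_eq_lancaster hX.aemeasurable hY.aemeasurable
    hf₁ hf₂ hφc hψd hsum hρ hjoint
  have hfst : ∀ P, Continuous P → ∫ ω, P (X ω) ∂μ = ∫ x, P x * f₁ x := fun P hP => by
    simpa [hf₂.2.2, hψ.integral_eval_mul_eq_zero hf₂.2.2] using
      hmoment P (fun _ => 1) hP continuous_const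
  have hsnd : ∀ Q, Continuous Q → ∫ ω, Q (Y ω) ∂μ = ∫ y, Q y * f₂ y := fun Q hQ => by
    simpa [hf₁.2.2, hφ.integral_eval_mul_eq_zero hf₁.2.2] using
      hmoment (fun _ => 1) Q continuous_const hQ
  refine pearson_eq_of_moments (m₁ := ∫ x, x * f₁ x) (m₂ := ∫ y, y * f₂ y) hX.aemeasurable
    hY.aemeasurable (inv_pos.2 (hφ.2.1 1)) (inv_pos.2 (hψ.2.1 1)) (hfst _ continuous_id)
    (hsnd _ continuous_id)
    ((hfst _ (by fun_prop)).trans (hφ.integral_sub_sq_mul hf₁))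
    ((hsnd _ (by fun_prop)).trans (hψ.integral_sub_sq_mul hf₂)) ?_
  rw [hmoment (fun x => x - ∫ t, t * f₁ t) (fun y => y - ∫ t, t * f₂ t) (by fun_prop)
      (by fun_prop), hφ.integral_sub_mul hf₁, zero_mul, zero_add,
    tsum_eq_single 0 fun n hn => by simp [hφ.integral_sub_mul_eval_mul hf₁, hn]]
  simp [hφ.integral_sub_mul_eval_mul hf₁, hψ.integral_sub_mul_eval_mul hf₂]

/-- If `(X,Y)` has the Lancaster density, then for every `n ≥ 1`,
`E(φₙ(X)|Y) = ρₙ ψₙ(Y)` a.s. and `E(ψₙ(Y)|X) = ρₙ φₙ(X)` a.s. -/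
theorem stmt9 {Ω : Type*} [MeasurableSpace Ω] (μ : Measure Ω) [IsProbabilityMeasure μ]
    (X Y : Ω → ℝ) (hX : Measurable X) (hY : Measurable Y)
    (α₁ ω₁ α₂ ω₂ : ℝ) (h₁ : α₁ < ω₁) (h₂ : α₂ < ω₂)
    (f₁ f₂ : ℝ → ℝ) (hf₁ : IsDensityOn f₁ α₁ ω₁) (hf₂ : IsDensityOn f₂ α₂ ω₂)
    (hm₁ : Measurable f₁) (hm₂ : Measurable f₂)
    (φ ψ : ℕ → Polynomial ℝ)
    (hφ : OrthonormalPolys f₁ φ) (hψ : OrthonormalPolys f₂ ψ)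
    (c d : ℕ → ℝ)
    (hc : ∀ n, c n = sSup ((fun x => |(φ n).eval x|) '' Set.Icc α₁ ω₁))
    (hd : ∀ n, d n = sSup ((fun y => |(ψ n).eval y|) '' Set.Icc α₂ ω₂))
    (ρ : ℕ → ℝ)
    (hsum : Summable fun n : ℕ => |ρ (n + 1)| * c (n + 1) * d (n + 1))
    (hρ : ∑' n : ℕ, |ρ (n + 1)| * c (n + 1) * d (n + 1) ≤ 1)
    (hjoint : Measure.map (fun ω => (X ω, Y ω)) μ =
      (volume : Measure (ℝ × ℝ)).withDensity
        (fun p => ENNReal.ofReal (lancaster f₁ f₂ φ ψ ρ p.1 p.2))) :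
    pearson μ X Y = ρ 1 :=
  stmt9_general μ X Y hX hY α₁ ω₁ α₂ ω₂ f₁ f₂ hf₁ hf₂ φ ψ hφ hψ c d hc hd ρ hsum hρ hjoint
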